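/- Let f, g : ℝ → ℝ be twice differentiable functions with f′(x) > 0 for all x, g′(y) > 0 for all y, and f(x) + g(y) ≠ 0 for all x, y ∈ ℝ. Define u(x,y) = log( 2·f′(x)·g′(y) / (f(x)+g(y))² ). Then u solves the Liouville equation: for all (x,y) ∈ ℝ², ∂ᵧ(∂ₓu)(x,y) = e^{u(x,y)}. -/

import Mathlib

/-- Partial derivative of `u : ℝ² → ℝ` in the first variable. -/
noncomputable def pdx (u : ℝ × ℝ → ℝ) (p : ℝ × ℝ) : ℝ :=
  deriv (fun s => u (s, p.2)) p.1

/-- Partial derivative of `u : ℝ² → ℝ` in the second variable. -/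
noncomputable def pdy (u : ℝ × ℝ → ℝ) (p : ℝ × ℝ) : ℝ :=
  deriv (fun s => u (p.1, s)) p.2

/-! Differentiating the logarithm in `x` gives
`∂ₓu = f''(x)/f'(x) - 2 f'(x)/(f(x) + g(y))`, which depends on `y` only through `f(x) + g(y)`;
differentiating once more in `y` gives `2 f'(x) g'(y)/(f(x) + g(y))² = e^u`. -/

noncomputable def darbouxLiouville (f g : ℝ → ℝ) : ℝ × ℝ → ℝ :=
  fun q => Real.log (2 * deriv f q.1 * deriv g q.2 / (f q.1 + g q.2) ^ 2)

theorem HasDerivAt.log_div_sq {φ ψ : ℝ → ℝ} {φ' ψ' a : ℝ} (hφ : HasDerivAt φ φ' a)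
    (hψ : HasDerivAt ψ ψ' a) (hφa : φ a ≠ 0) (hψa : ψ a ≠ 0) :
    HasDerivAt (fun s => Real.log (φ s / ψ s ^ 2)) (φ' / φ a - 2 * ψ' / ψ a) a := by
  have hsq : HasDerivAt (fun s => ψ s ^ 2) (2 * ψ a * ψ') a := by
    have := hψ.pow 2
    simp only [Nat.cast_ofNat, pow_one, Nat.add_one_sub_one] at this
    exact this
  refine ((hφ.fun_div hsq (pow_ne_zero 2 hψa)).log
    (div_ne_zero hφa (pow_ne_zero 2 hψa))).congr_deriv ?_
  field_simp

theorem HasDerivAt.const_sub_const_div {ψ : ℝ → ℝ} {ψ' a : ℝ} (c k : ℝ)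
    (hψ : HasDerivAt ψ ψ' a) (hψa : ψ a ≠ 0) :
    HasDerivAt (fun s => c - k / ψ s) (k * ψ' / ψ a ^ 2) a :=
  (((hasDerivAt_const a k).fun_div hψ hψa).const_sub c).congr_deriv (by ring)

section

variable {f g : ℝ → ℝ}

theorem pdx_darbouxLiouville {a b : ℝ} (hf : DifferentiableAt ℝ f a)
    (hf' : DifferentiableAt ℝ (deriv f) a) (hfa : deriv f a ≠ 0) (hgb : deriv g b ≠ 0)
    (hab : f a + g b ≠ 0) :
    pdx (darbouxLiouville f g) (a, b)
      = deriv (deriv f) a / deriv f a - 2 * deriv f a / (f a + g b) := by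
  have hφ : HasDerivAt (fun s => 2 * deriv f s * deriv g b)
      (2 * deriv (deriv f) a * deriv g b) a :=
    (hf'.hasDerivAt.const_mul 2).mul_const _
  have hψ : HasDerivAt (fun s => f s + g b) (deriv f a) a := hf.hasDerivAt.add_const _
  simp only [pdx, darbouxLiouville]
  rw [(hφ.log_div_sq hψ (by simp [hfa, hgb]) hab).deriv]
  field_simp

theorem pdy_pdx_darbouxLiouville {x y : ℝ} (hf : DifferentiableAt ℝ f x)
    (hf' : DifferentiableAt ℝ (deriv f) x) (hg : DifferentiableAt ℝ g y)
    (hfx : deriv f x ≠ 0) (hg0 : ∀ t, deriv g t ≠ 0) (hne : ∀ t, f x + g t ≠ 0) :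
    pdy (pdx (darbouxLiouville f g)) (x, y)
      = 2 * deriv f x * deriv g y / (f x + g y) ^ 2 := by
  have hpdx : (fun t => pdx (darbouxLiouville f g) (x, t))
      = fun t => deriv (deriv f) x / deriv f x - 2 * deriv f x / (f x + g t) :=
    funext fun t => pdx_darbouxLiouville hf hf' hfx (hg0 t) (hne t)
  simp only [pdy, hpdx]
  rw [((hg.hasDerivAt.const_add (f x)).const_sub_const_div _ _ (hne y)).deriv]

end

theorem liouville_closed_form_solution_general (f g : ℝ → ℝ)
    (hf : Differentiable ℝ f) (hf' : Differentiable ℝ (deriv f))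
    (hg : Differentiable ℝ g)
    (hfpos : ∀ x, 0 < deriv f x) (hgpos : ∀ y, 0 < deriv g y)
    (hne : ∀ x y, f x + g y ≠ 0) :
    ∀ p : ℝ × ℝ,
      pdy (pdx (fun q : ℝ × ℝ =>
          Real.log (2 * deriv f q.1 * deriv g q.2 / (f q.1 + g q.2) ^ 2))) p
        = Real.exp (Real.log (2 * deriv f p.1 * deriv g p.2 / (f p.1 + g p.2) ^ 2)) := by
  rintro ⟨x, y⟩
  have hpos : 0 < 2 * deriv f x * deriv g y / (f x + g y) ^ 2 := by
    have := hfpos x; have := hgpos y; have := hne x y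
    positivity
  rw [Real.exp_log hpos]
  exact pdy_pdx_darbouxLiouville (hf x) (hf' x) (hg y) (hfpos x).ne' (fun t => (hgpos t).ne')
    (hne x)

/-- The classical Darboux-integration closed-form solution of the Liouville
equation `u_{xy} = e^u`: if `f, g : ℝ → ℝ` are twice differentiable with
`f′ > 0`, `g′ > 0` and `f(x) + g(y) ≠ 0` everywhere, then
`u(x,y) = log(2·f′(x)·g′(y)/(f(x)+g(y))²)` satisfies `∂ᵧ(∂ₓu) = e^u`. -/
theorem liouville_closed_form_solution (f g : ℝ → ℝ)
    (hf : Differentiable ℝ f) (hf' : Differentiable ℝ (deriv f))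
    (hg : Differentiable ℝ g) (hg' : Differentiable ℝ (deriv g))
    (hfpos : ∀ x, 0 < deriv f x) (hgpos : ∀ y, 0 < deriv g y)
    (hne : ∀ x y, f x + g y ≠ 0) :
    ∀ p : ℝ × ℝ,
      pdy (pdx (fun q : ℝ × ℝ =>
          Real.log (2 * deriv f q.1 * deriv g q.2 / (f q.1 + g q.2) ^ 2))) p
        = Real.exp (Real.log (2 * deriv f p.1 * deriv g p.2 / (f p.1 + g p.2) ^ 2)) :=
  liouville_closed_form_solution_general f g hf hf' hg hfpos hgpos hne
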